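/- arXiv:1609.01852 — 5 statements merged into one kernel-verified Lean document; each statement's English description precedes it below -/
import Mathlib

section
/- Let f be the analytic function f(z) = exp(-(1+z)/(1-z)) on the open unit disc and A(z) = -4z/(1-z)^4. Then f is a bounded non-vanishing solution of f'' + A f = 0 on the unit disc, while sup over z in D of |A(z)|(1-|z|^2)^2 is infinite. -/
/-!
`f = exp ∘ g` with `g(z) = -(1+z)/(1-z)`, so `f' = g' f` and `f'' = (g'' + g'^2) f`; with
`g' = -2/(1-z)^2` this gives `f'' = 4z/(1-z)^4 · f = -A f`. The Cayley transform
`(1+z)/(1-z)` maps the disc into the right half-plane, hence `|f| = exp(-Re((1+z)/(1-z))) ≤ 1`.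
On the radius `z = t ∈ [0,1)` one has `|A(t)|(1-t^2)^2 = 4t(1+t)^2/(1-t)^2 → ∞` as `t → 1`.
-/

open Metric Set

/-- The solution `f(z) = exp(-(1+z)/(1-z))`. -/
noncomputable def solF : ℂ → ℂ := fun z => Complex.exp (-(1 + z) / (1 - z))

/-- The coefficient `A(z) = -4z/(1-z)^4`. -/
noncomputable def coeffA : ℂ → ℂ := fun z => -4 * z / (1 - z) ^ 4

open Filter Topology

section Solution

variable {z : ℂ}

lemma hasDerivAt_neg_one_add_div_one_sub (hz : z ≠ 1) :
    HasDerivAt (fun w : ℂ => -(1 + w) / (1 - w)) (-2 / (1 - z) ^ 2) z := by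
  have hz' : 1 - z ≠ 0 := sub_ne_zero.2 hz.symm
  have hnum : HasDerivAt (fun w : ℂ => -(1 + w)) (-1) z := by
    simpa using ((hasDerivAt_id z).const_add 1).fun_neg
  have hden : HasDerivAt (fun w : ℂ => 1 - w) (-1) z := by
    simpa using (hasDerivAt_id z).const_sub 1
  refine (hnum.fun_div hden hz').congr_deriv ?_
  ring

lemma hasDerivAt_solF (hz : z ≠ 1) : HasDerivAt solF (-2 / (1 - z) ^ 2 * solF z) z := by
  rw [mul_comm]
  exact (hasDerivAt_neg_one_add_div_one_sub hz).cexp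

lemma deriv_solF_eventuallyEq (hz : z ≠ 1) :
    deriv solF =ᶠ[𝓝 z] fun w => -2 / (1 - w) ^ 2 * solF w := by
  filter_upwards [isOpen_ne.mem_nhds hz] with w hw
  exact (hasDerivAt_solF hw).deriv

lemma deriv_deriv_solF (hz : z ≠ 1) : deriv (deriv solF) z = -coeffA z * solF z := by
  have hz' : 1 - z ≠ 0 := sub_ne_zero.2 hz.symm
  have hcoeff : HasDerivAt (fun w : ℂ => -2 / (1 - w) ^ 2) (-4 / (1 - z) ^ 3) z := by
    have hsq : HasDerivAt (fun w : ℂ => (1 - w) ^ 2) (-(2 * (1 - z))) z := by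
      simpa using ((hasDerivAt_id z).const_sub 1).fun_pow 2
    refine ((hasDerivAt_const z (-2 : ℂ)).fun_div hsq (pow_ne_zero 2 hz')).congr_deriv ?_
    field_simp
    ring
  rw [(deriv_solF_eventuallyEq hz).deriv_eq, (hcoeff.fun_mul (hasDerivAt_solF hz)).deriv, coeffA]
  field_simp
  ring

end Solution

lemma re_one_add_div_one_sub_nonneg {z : ℂ} (hz : ‖z‖ ≤ 1) : 0 ≤ ((1 + z) / (1 - z)).re := by
  have hnormSq : Complex.normSq z ≤ 1 := by
    rw [← Complex.sq_norm]; nlinarith [norm_nonneg z]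
  rw [Complex.div_re, ← add_div]
  refine div_nonneg ?_ (Complex.normSq_nonneg _)
  rw [Complex.normSq_apply] at hnormSq
  simp only [Complex.add_re, Complex.one_re, Complex.sub_re, Complex.add_im, Complex.one_im,
    Complex.sub_im]
  nlinarith

lemma norm_solF_le_one {z : ℂ} (hz : ‖z‖ ≤ 1) : ‖solF z‖ ≤ 1 := by
  rw [solF, Complex.norm_exp, neg_div, Complex.neg_re, Real.exp_le_one_iff, neg_nonpos]
  exact re_one_add_div_one_sub_nonneg hz

lemma norm_coeffA_mul_one_sub_sq_sq_ofReal {t : ℝ} (ht : 0 ≤ t) :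
    ‖coeffA t‖ * (1 - ‖(t : ℂ)‖ ^ 2) ^ 2 = 4 * t * (1 + t) ^ 2 / (1 - t) ^ 2 := by
  have hA : coeffA t = ((-4 * t / (1 - t) ^ 4 : ℝ) : ℂ) := by simp [coeffA]
  rw [hA, Complex.norm_real, Complex.norm_real, Real.norm_of_nonneg ht, Real.norm_eq_abs, abs_div,
    abs_mul, abs_of_nonneg ht, abs_of_nonneg (by positivity : (0:ℝ) ≤ (1 - t) ^ 4)]
  rcases eq_or_ne t 1 with rfl | ht1
  · simp
  · have h1t : 1 - t ≠ 0 := sub_ne_zero.2 ht1.symm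
    field_simp
    ring

lemma tendsto_four_mul_one_add_sq_div_one_sub_sq :
    Tendsto (fun t : ℝ => 4 * t * (1 + t) ^ 2 / (1 - t) ^ 2) (𝓝[<] 1) atTop := by
  have hnum : Tendsto (fun t : ℝ => 4 * t * (1 + t) ^ 2) (𝓝[<] 1) (𝓝 16) := by
    refine tendsto_nhdsWithin_of_tendsto_nhds ?_
    convert (by fun_prop : Continuous fun t : ℝ => 4 * t * (1 + t) ^ 2).tendsto 1 using 2
    norm_num
  have hden : Tendsto (fun t : ℝ => (1 - t) ^ 2) (𝓝[<] 1) (𝓝[>] 0) := by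
    refine tendsto_nhdsWithin_of_tendsto_nhds_of_eventually_within _ ?_ ?_
    · refine tendsto_nhdsWithin_of_tendsto_nhds ?_
      convert (by fun_prop : Continuous fun t : ℝ => (1 - t) ^ 2).tendsto 1 using 2
      norm_num
    · filter_upwards [self_mem_nhdsWithin] with t (ht : t < 1)
      exact pow_pos (sub_pos.2 ht) 2
  exact hnum.pos_mul_atTop (by norm_num) hden.inv_tendsto_nhdsGT_zero

theorem stmt1 :
    DifferentiableOn ℂ solF (ball (0 : ℂ) 1) ∧
    (∀ z ∈ ball (0 : ℂ) 1, solF z ≠ 0) ∧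
    (∀ z ∈ ball (0 : ℂ) 1, deriv (deriv solF) z + coeffA z * solF z = 0) ∧
    (∃ C : ℝ, ∀ z ∈ ball (0 : ℂ) 1, ‖solF z‖ ≤ C) ∧
    ¬ ∃ C : ℝ, ∀ z ∈ ball (0 : ℂ) 1, ‖coeffA z‖ * (1 - ‖z‖ ^ 2) ^ 2 ≤ C := by
  have ne_one {z : ℂ} (hz : z ∈ ball (0 : ℂ) 1) : z ≠ 1 := by
    rintro rfl
    simp at hz
  refine ⟨fun z hz => (hasDerivAt_solF (ne_one hz)).differentiableAt.differentiableWithinAt,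
    fun z _ => Complex.exp_ne_zero _,
    fun z hz => by rw [deriv_deriv_solF (ne_one hz)]; ring,
    ⟨1, fun z hz => norm_solF_le_one (mem_ball_zero_iff.1 hz).le⟩, ?_⟩
  rintro ⟨C, hC⟩
  obtain ⟨t, hCt, ht0, ht1⟩ :=
    ((tendsto_four_mul_one_add_sq_div_one_sub_sq.eventually_gt_atTop C).and
      (Ioo_mem_nhdsLT (zero_lt_one' ℝ))).exists
  have hmem : (t : ℂ) ∈ ball (0 : ℂ) 1 := by
    simpa [abs_of_nonneg ht0.le] using ht1
  have hle := hC t hmem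
  rw [norm_coeffA_mul_one_sub_sq_sq_ofReal ht0.le] at hle
  linarith
end

section
/- Suppose the equation f'' + A f = 0 with A analytic in the unit disc admits two linearly independent bounded analytic solutions f₁, f₂ with inf_{z∈D}(|f₁(z)| + |f₂(z)|) > 0. Then sup_{z∈D} |A(z)|(1-|z|^2)^2 < ∞. -/
open Metric Set

lemma cauchy2aux {f : ℂ → ℂ} (hf : DifferentiableOn ℂ f (ball (0 : ℂ) 1)) {C : ℝ}
    (hb : ∀ w ∈ ball (0 : ℂ) 1, ‖f w‖ ≤ C) {z : ℂ} (hz : z ∈ ball (0 : ℂ) 1) :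
    ‖deriv (deriv f) z‖ ≤ C / ((1 - ‖z‖) / 4) ^ 2 := by
  have hz1 : ‖z‖ < 1 := by simpa using hz
  set r : ℝ := (1 - ‖z‖) / 4 with hrdef
  have hr : 0 < r := by rw [hrdef]; linarith
  have hsub : ∀ w ∈ closedBall z r, closedBall w r ⊆ ball (0 : ℂ) 1 := by
    intro w hw x hx
    rw [mem_closedBall] at hw hx
    rw [mem_ball]
    calc dist x 0 ≤ dist x w + dist w z + dist z 0 := dist_triangle4 x w z 0
      _ ≤ r + r + ‖z‖ := by
          have : dist z 0 = ‖z‖ := by simp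
          linarith
      _ < 1 := by rw [hrdef]; linarith
  have hd1 : ∀ w ∈ closedBall z r, ‖deriv f w‖ ≤ C / r := by
    intro w hw
    apply Complex.norm_deriv_le_of_forall_mem_sphere_norm_le hr
    · exact (hf.mono (by rw [closure_ball w hr.ne']; exact hsub w hw)).diffContOnCl
    · intro x hx
      exact hb x (hsub w hw (sphere_subset_closedBall hx))
  have hdf : DifferentiableOn ℂ (deriv f) (ball (0 : ℂ) 1) :=
    ((hf.analyticOnNhd isOpen_ball).deriv).differentiableOn
  have hzsub : closedBall z r ⊆ ball (0 : ℂ) 1 :=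
    hsub z (mem_closedBall_self hr.le)
  have h2 : ‖deriv (deriv f) z‖ ≤ C / r / r := by
    apply Complex.norm_deriv_le_of_forall_mem_sphere_norm_le hr
    · exact (hdf.mono (by rw [closure_ball z hr.ne']; exact hzsub)).diffContOnCl
    · intro x hx
      exact hd1 x (sphere_subset_closedBall hx)
  calc ‖deriv (deriv f) z‖ ≤ C / r / r := h2
    _ = C / r ^ 2 := by rw [div_div, sq]

lemma algaux (M t ε : ℝ) (h1 : t ≠ 0) (h2 : ε ≠ 0) :
    M / (t / 4) ^ 2 / (ε / 2) * (4 * t ^ 2) = 128 * M / ε := by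
  field_simp
  ring

theorem stmt2 (A f₁ f₂ : ℂ → ℂ)
    (hA : DifferentiableOn ℂ A (ball (0 : ℂ) 1))
    (hf₁ : DifferentiableOn ℂ f₁ (ball (0 : ℂ) 1))
    (hf₂ : DifferentiableOn ℂ f₂ (ball (0 : ℂ) 1))
    (hode₁ : ∀ z ∈ ball (0 : ℂ) 1, deriv (deriv f₁) z + A z * f₁ z = 0)
    (hode₂ : ∀ z ∈ ball (0 : ℂ) 1, deriv (deriv f₂) z + A z * f₂ z = 0)
    (hb₁ : ∃ C : ℝ, ∀ z ∈ ball (0 : ℂ) 1, ‖f₁ z‖ ≤ C)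
    (hb₂ : ∃ C : ℝ, ∀ z ∈ ball (0 : ℂ) 1, ‖f₂ z‖ ≤ C)
    (hind : ∀ c₁ c₂ : ℂ, (∀ z ∈ ball (0 : ℂ) 1, c₁ * f₁ z + c₂ * f₂ z = 0) →
      c₁ = 0 ∧ c₂ = 0)
    (hinf : ∃ ε > (0 : ℝ), ∀ z ∈ ball (0 : ℂ) 1, ε ≤ ‖f₁ z‖ + ‖f₂ z‖) :
    ∃ C : ℝ, ∀ z ∈ ball (0 : ℂ) 1, ‖A z‖ * (1 - ‖z‖ ^ 2) ^ 2 ≤ C := by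
  obtain ⟨C₁, hC₁⟩ := hb₁
  obtain ⟨C₂, hC₂⟩ := hb₂
  obtain ⟨ε, hε, hεle⟩ := hinf
  set M : ℝ := max C₁ C₂ with hMdef
  have hM : ∀ i ∈ ({f₁, f₂} : Set (ℂ → ℂ)), ∀ z ∈ ball (0 : ℂ) 1, ‖i z‖ ≤ M := by
    rintro i (rfl | rfl) z hz
    · exact (hC₁ z hz).trans (le_max_left _ _)
    · exact (hC₂ z hz).trans (le_max_right _ _)
  refine ⟨128 * M / ε, ?_⟩
  intro z hz
  have hz1 : ‖z‖ < 1 := by simpa using hz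
  have hz0 : 0 ≤ ‖z‖ := norm_nonneg z
  -- one of the two functions is ≥ ε/2 at z
  have key : ∀ f : ℂ → ℂ, DifferentiableOn ℂ f (ball (0 : ℂ) 1) →
      (∀ w ∈ ball (0 : ℂ) 1, ‖f w‖ ≤ M) →
      deriv (deriv f) z + A z * f z = 0 → ε / 2 ≤ ‖f z‖ →
      ‖A z‖ * (1 - ‖z‖ ^ 2) ^ 2 ≤ 128 * M / ε := by
    intro f hf hbM hode hfz
    have hAf : ‖A z‖ * ‖f z‖ = ‖deriv (deriv f) z‖ := by
      rw [← norm_mul]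
      have : A z * f z = -(deriv (deriv f) z) := by linear_combination hode
      rw [this, norm_neg]
    have hcb := cauchy2aux hf hbM hz
    have hr : (0:ℝ) < (1 - ‖z‖) / 4 := by linarith
    have hfzpos : (0:ℝ) < ‖f z‖ := lt_of_lt_of_le (by linarith) hfz
    have hAle : ‖A z‖ ≤ M / ((1 - ‖z‖) / 4) ^ 2 / (ε / 2) := by
      rw [le_div_iff₀ (by linarith : (0:ℝ) < ε / 2)]
      calc ‖A z‖ * (ε / 2) ≤ ‖A z‖ * ‖f z‖ :=
            mul_le_mul_of_nonneg_left hfz (norm_nonneg _)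
        _ = ‖deriv (deriv f) z‖ := hAf
        _ ≤ M / ((1 - ‖z‖) / 4) ^ 2 := hcb
    have hfactor : (1 - ‖z‖ ^ 2) ^ 2 ≤ 4 * (1 - ‖z‖) ^ 2 := by
      have hid : 4 * (1 - ‖z‖) ^ 2 - (1 - ‖z‖ ^ 2) ^ 2
          = (1 - ‖z‖) ^ 2 * ((1 - ‖z‖) * (3 + ‖z‖)) := by ring
      nlinarith [mul_nonneg (sq_nonneg (1 - ‖z‖))
        (mul_nonneg (by linarith : (0:ℝ) ≤ 1 - ‖z‖) (by linarith : (0:ℝ) ≤ 3 + ‖z‖))]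
    have hApos : 0 ≤ ‖A z‖ := norm_nonneg _
    calc ‖A z‖ * (1 - ‖z‖ ^ 2) ^ 2 ≤ (M / ((1 - ‖z‖) / 4) ^ 2 / (ε / 2)) * (4 * (1 - ‖z‖) ^ 2) := by
          apply mul_le_mul hAle hfactor (by positivity) ?_
          have hM0 : 0 ≤ M := le_trans (norm_nonneg (f z)) (hbM z hz)
          positivity
      _ = 128 * M / ε := by
          exact algaux M (1 - ‖z‖) ε (by linarith) (ne_of_gt hε)
  rcases le_or_gt (ε / 2) ‖f₁ z‖ with h | h
  · exact key f₁ hf₁ (hM f₁ (by simp)) (hode₁ z hz) h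
  · have : ε / 2 ≤ ‖f₂ z‖ := by have := hεle z hz; linarith
    exact key f₂ hf₂ (hM f₂ (by simp)) (hode₂ z hz) this
end

section
/- The function A(z) = (1-z)^{-2} (log(e/(1-z)))^{-1} on the unit disc belongs to LMOA'' but does not belong to L_α for any α > 1; that is, sup_{0<a<1} (log(e/(1-a)))^2 (1-a)^{-1} ∫_{S_a} |A(z)|^2 (1-|z|^2)^3 dm(z) < ∞, while sup_{z∈D} |A(z)|(1-|z|^2)^2 (log(e/(1-|z|)))^α = ∞ for every α > 1. -/
/-!
On the Carleson square `S_a`, `0 < a < 1`, every point has `|1 - z| ≤ 3/2 (1 - a)`, so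
`|log (e / (1 - z))| ≥ L / 2` with `L = log (e / (1 - a))`; together with `1 - |z|² ≤ 2 (1 - Re z)`
this bounds the integrand by `32 L⁻² b³ / (b² + y²)²`, where `b = 1 - Re z`, `y = Im z`.
`S_a` lies in the strip `a cos ((1 - a) / 2) ≤ Re z < 1`, of width at most `9/8 (1 - a)`, and
`∫ b³ / (b² + y²)² dy ≤ ∫ b / (b² + y²) dy = π`, which gives the bound `36`.

On the radius, `|A(r)| (1 - r²)² L^α = (1 + r)² L^(α-1)` with `L = log (e / (1 - r)) → ∞`.
-/

open Metric Set Real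

/-- The function `A(z) = (1-z)^{-2} (log(e/(1-z)))^{-1}`. -/
noncomputable def funA : ℂ → ℂ :=
  fun z => ((1 - z) ^ 2)⁻¹ * (Complex.log ((Real.exp 1 : ℂ) / (1 - z)))⁻¹

/-- The Carleson square with respect to a point `a` of the unit disc. -/
noncomputable def carlesonSq (a : ℂ) : Set ℂ :=
  if a = 0 then ball (0 : ℂ) 1 else
    {z : ℂ | ‖a‖ < ‖z‖ ∧ ‖z‖ < 1 ∧
      |Complex.arg z - Complex.arg a| ≤ (1 - ‖a‖) / 2}

open MeasureTheory
open scoped ENNReal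

lemma inv_sq_add_sq_eq {b : ℝ} (hb : b ≠ 0) :
    (fun y : ℝ => (b ^ 2 + y ^ 2)⁻¹) = fun y => (b ^ 2)⁻¹ * (1 + (y / b) ^ 2)⁻¹ := by
  funext y
  field_simp

lemma integrable_inv_sq_add_sq {b : ℝ} (hb : b ≠ 0) :
    Integrable fun y : ℝ => (b ^ 2 + y ^ 2)⁻¹ := by
  rw [inv_sq_add_sq_eq hb]
  exact (integrable_inv_one_add_sq.comp_div hb).const_mul _

lemma integral_univ_inv_sq_add_sq {b : ℝ} (hb : 0 < b) :
    ∫ y : ℝ, (b ^ 2 + y ^ 2)⁻¹ = π / b := by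
  rw [inv_sq_add_sq_eq hb.ne', integral_const_mul,
    Measure.integral_comp_div (fun t : ℝ => (1 + t ^ 2)⁻¹), integral_univ_inv_one_add_sq,
    abs_of_pos hb, smul_eq_mul]
  field_simp

lemma lintegral_pow_three_div_sq_add_sq_sq_le {b : ℝ} (hb : 0 < b) :
    ∫⁻ y : ℝ, ENNReal.ofReal (b ^ 3 / (b ^ 2 + y ^ 2) ^ 2) ≤ ENNReal.ofReal π := by
  have hle (y : ℝ) : b ^ 3 / (b ^ 2 + y ^ 2) ^ 2 ≤ b * (b ^ 2 + y ^ 2)⁻¹ := by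
    rw [div_le_iff₀ (by positivity), mul_assoc, sq (b ^ 2 + y ^ 2),
      inv_mul_cancel_left₀ (by positivity)]
    nlinarith [sq_nonneg y, hb.le]
  calc ∫⁻ y : ℝ, ENNReal.ofReal (b ^ 3 / (b ^ 2 + y ^ 2) ^ 2)
      ≤ ∫⁻ y : ℝ, ENNReal.ofReal (b * (b ^ 2 + y ^ 2)⁻¹) :=
        lintegral_mono fun y => ENNReal.ofReal_le_ofReal (hle y)
    _ = ENNReal.ofReal π := by
        rw [← ofReal_integral_eq_lintegral_ofReal ((integrable_inv_sq_add_sq hb.ne').const_mul b)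
          (ae_of_all _ fun y => by positivity), integral_const_mul,
          integral_univ_inv_sq_add_sq hb, mul_div_cancel₀ _ hb.ne']

lemma setLIntegral_strip_le (x₀ : ℝ) :
    ∫⁻ z in {z : ℂ | x₀ ≤ z.re ∧ z.re < 1},
        ENNReal.ofReal ((1 - z.re) ^ 3 / ((1 - z.re) ^ 2 + z.im ^ 2) ^ 2)
      ≤ ENNReal.ofReal (1 - x₀) * ENNReal.ofReal π := by
  set G : ℝ × ℝ → ℝ≥0∞ := fun p => ENNReal.ofReal ((1 - p.1) ^ 3 / ((1 - p.1) ^ 2 + p.2 ^ 2) ^ 2)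
  have hstrip : {z : ℂ | x₀ ≤ z.re ∧ z.re < 1}
      = Complex.measurableEquivRealProd ⁻¹' (Ico x₀ 1 ×ˢ univ) := by
    ext z
    simp [Complex.measurableEquivRealProd_apply]
  change ∫⁻ z in _, G (Complex.measurableEquivRealProd z) ≤ _
  rw [hstrip, Complex.volume_preserving_equiv_real_prod.setLIntegral_comp_preimage_emb
    Complex.measurableEquivRealProd.measurableEmbedding G, Measure.volume_eq_prod,
    ← Measure.prod_restrict, Measure.restrict_univ, lintegral_prod _ (by fun_prop)]
  calc ∫⁻ x in Ico x₀ 1, ∫⁻ y, G (x, y)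
      ≤ ∫⁻ _ in Ico x₀ 1, ENNReal.ofReal π :=
        setLIntegral_mono measurable_const fun x hx =>
          lintegral_pow_three_div_sq_add_sq_sq_le (sub_pos.2 hx.2)
    _ = ENNReal.ofReal (1 - x₀) * ENNReal.ofReal π := by
        rw [setLIntegral_const, Real.volume_Ico, mul_comm]

lemma mul_cos_le_re {z : ℂ} {a t : ℝ} (hz : a ≤ ‖z‖) (ht : t ≤ π)
    (harg : |Complex.arg z| ≤ t) (hcos : 0 ≤ cos t) : a * cos t ≤ z.re :=
  calc a * cos t ≤ ‖z‖ * cos t := mul_le_mul_of_nonneg_right hz hcos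
    _ ≤ ‖z‖ * cos (Complex.arg z) := by
        rw [← cos_abs (Complex.arg z)]
        exact mul_le_mul_of_nonneg_left
          (cos_le_cos_of_nonneg_of_le_pi (abs_nonneg _) ht harg) (norm_nonneg z)
    _ = z.re := Complex.norm_mul_cos_arg z

lemma abs_im_le_norm_mul_abs_arg (z : ℂ) : |z.im| ≤ ‖z‖ * |Complex.arg z| := by
  rw [← Complex.norm_mul_sin_arg, abs_mul, abs_norm]
  exact mul_le_mul_of_nonneg_left abs_sin_le_abs (norm_nonneg z)

lemma one_sub_mul_cos_le {a : ℝ} (ha0 : 0 ≤ a) (ha1 : a ≤ 1) :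
    1 - a * cos ((1 - a) / 2) ≤ 9 / 8 * (1 - a) := by
  nlinarith [one_sub_sq_div_two_le_cos (x := (1 - a) / 2), mul_nonneg ha0 (sub_nonneg.2 ha1)]

lemma sq_norm_one_sub (z : ℂ) : ‖1 - z‖ ^ 2 = (1 - z.re) ^ 2 + z.im ^ 2 := by
  rw [Complex.sq_norm, Complex.normSq_apply]
  simp only [Complex.sub_re, Complex.one_re, Complex.sub_im, Complex.one_im]
  ring

lemma norm_lt_one_of_mem_carlesonSq {a z : ℂ} (hz : z ∈ carlesonSq a) : ‖z‖ < 1 := by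
  unfold carlesonSq at hz
  split_ifs at hz
  · simpa using hz
  · exact hz.2.1

lemma carlesonSq_ofReal {a : ℝ} (ha : 0 < a) :
    carlesonSq a = {z : ℂ | a < ‖z‖ ∧ ‖z‖ < 1 ∧ |Complex.arg z| ≤ (1 - a) / 2} := by
  rw [carlesonSq, if_neg (Complex.ofReal_ne_zero.2 ha.ne')]
  simp [Complex.norm_real, abs_of_pos ha, Complex.arg_ofReal_of_nonneg ha.le]

section CarlesonSquare

variable {a : ℝ} {z : ℂ}

lemma mul_cos_le_re_of_mem_carlesonSq (ha0 : 0 < a) (ha1 : a < 1) (hz : z ∈ carlesonSq a) :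
    a * cos ((1 - a) / 2) ≤ z.re := by
  rw [carlesonSq_ofReal ha0] at hz
  exact mul_cos_le_re hz.1.le (by linarith [pi_gt_three]) hz.2.2
    (cos_nonneg_of_neg_pi_div_two_le_of_le (by linarith [pi_pos]) (by linarith [pi_gt_three]))

lemma norm_one_sub_le_of_mem_carlesonSq (ha0 : 0 < a) (ha1 : a < 1) (hz : z ∈ carlesonSq a) :
    ‖1 - z‖ ≤ 3 / 2 * (1 - a) := by
  have hre := mul_cos_le_re_of_mem_carlesonSq ha0 ha1 hz
  rw [carlesonSq_ofReal ha0] at hz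
  obtain ⟨-, hz1, harg⟩ := hz
  have him : |z.im| ≤ (1 - a) / 2 :=
    (abs_im_le_norm_mul_abs_arg z).trans
      (by nlinarith [norm_nonneg z, abs_nonneg (Complex.arg z)])
  have hre1 : z.re < 1 := (Complex.re_le_norm z).trans_lt hz1
  refine pow_le_pow_iff_left₀ (norm_nonneg _) (by linarith) two_ne_zero |>.1 ?_
  rw [sq_norm_one_sub, ← sq_abs z.im]
  nlinarith [one_sub_mul_cos_le ha0.le ha1.le, abs_nonneg z.im]

end CarlesonSquare

lemma one_le_log_exp_one_div {b : ℝ} (hb0 : 0 < b) (hb1 : b ≤ 1) :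
    1 ≤ Real.log (exp 1 / b) := by
  rw [Real.log_div (exp_ne_zero 1) hb0.ne', Real.log_exp]
  linarith [Real.log_nonpos hb0.le hb1]

lemma re_log_exp_one_div {w : ℂ} (hw : w ≠ 0) :
    (Complex.log (exp 1 / w)).re = 1 - Real.log ‖w‖ := by
  rw [Complex.log_re, norm_div, Complex.norm_real, norm_of_nonneg (exp_pos 1).le,
    Real.log_div (exp_ne_zero 1) (norm_ne_zero_iff.2 hw), Real.log_exp]

lemma log_exp_one_div_le_two_mul_norm_log {a : ℝ} (ha0 : 0 ≤ a) (ha1 : a < 1) {w : ℂ}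
    (hw : w ≠ 0) (hwa : ‖w‖ ≤ 3 / 2 * (1 - a)) :
    Real.log (exp 1 / (1 - a)) ≤ 2 * ‖Complex.log (exp 1 / w)‖ := by
  have hlog32 : Real.log (3 / 2) ≤ 1 / 2 := by
    rw [Real.log_le_iff_le_exp (by norm_num)]
    linarith [add_one_le_exp (1 / 2 : ℝ)]
  have hlogw : Real.log ‖w‖ ≤ Real.log (3 / 2) + Real.log (1 - a) := by
    rw [← Real.log_mul (by norm_num) (by linarith)]
    exact Real.log_le_log (norm_pos_iff.2 hw) hwa
  have hloga : Real.log (1 - a) ≤ 0 := Real.log_nonpos (by linarith) (by linarith)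
  rw [Real.log_div (exp_ne_zero 1) (by linarith), Real.log_exp]
  linarith [re_log_exp_one_div hw ▸ Complex.re_le_norm (Complex.log (exp 1 / w))]

lemma norm_funA (z : ℂ) :
    ‖funA z‖ = (‖1 - z‖ ^ 2 * ‖Complex.log (exp 1 / (1 - z))‖)⁻¹ := by
  rw [funA, norm_mul, norm_inv, norm_inv, norm_pow, mul_inv]

lemma sq_norm_funA_mul_le {a : ℝ} {z : ℂ} (ha0 : 0 < a) (ha1 : a < 1) (hz : z ∈ carlesonSq a) :
    ‖funA z‖ ^ 2 * (1 - ‖z‖ ^ 2) ^ 3 ≤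
      32 / Real.log (exp 1 / (1 - a)) ^ 2 * ((1 - z.re) ^ 3 / ((1 - z.re) ^ 2 + z.im ^ 2) ^ 2) := by
  set L := Real.log (exp 1 / (1 - a))
  have hz1 := norm_lt_one_of_mem_carlesonSq hz
  have hw : 1 - z ≠ 0 := sub_ne_zero.2 fun h => by simp [← h] at hz1
  have hL := log_exp_one_div_le_two_mul_norm_log ha0.le ha1 hw
    (norm_one_sub_le_of_mem_carlesonSq ha0 ha1 hz)
  have hL1 : 1 ≤ L := one_le_log_exp_one_div (by linarith) (by linarith)
  have hD : 0 < ‖1 - z‖ ^ 2 := by positivity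
  have hfunA : ‖funA z‖ ≤ 2 / (L * ‖1 - z‖ ^ 2) := by
    have hlog : 0 < ‖Complex.log (exp 1 / (1 - z))‖ := by linarith
    rw [norm_funA, ← one_div, div_le_div_iff₀ (by positivity) (by positivity)]
    nlinarith
  have hnorm : 0 ≤ 1 - ‖z‖ ^ 2 := by nlinarith [norm_nonneg z]
  have hre : 1 - ‖z‖ ^ 2 ≤ 2 * (1 - z.re) := by
    nlinarith [Complex.re_le_norm z, norm_nonneg z]
  calc ‖funA z‖ ^ 2 * (1 - ‖z‖ ^ 2) ^ 3
      ≤ (2 / (L * ‖1 - z‖ ^ 2)) ^ 2 * (2 * (1 - z.re)) ^ 3 := by gcongr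
    _ = 32 / L ^ 2 * ((1 - z.re) ^ 3 / ((1 - z.re) ^ 2 + z.im ^ 2) ^ 2) := by
        rw [← sq_norm_one_sub]
        field_simp
        ring

lemma integral_carlesonSq_le {a : ℝ} (ha0 : 0 < a) (ha1 : a < 1) :
    ∫ z in carlesonSq a, ‖funA z‖ ^ 2 * (1 - ‖z‖ ^ 2) ^ 3 ≤
      36 * π * (1 - a) / Real.log (exp 1 / (1 - a)) ^ 2 := by
  set L := Real.log (exp 1 / (1 - a))
  set x₀ := a * cos ((1 - a) / 2)
  set h : ℂ → ℝ := fun z => (1 - z.re) ^ 3 / ((1 - z.re) ^ 2 + z.im ^ 2) ^ 2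
  have hL1 : 1 ≤ L := one_le_log_exp_one_div (by linarith) (by linarith)
  have hlint : ∫⁻ z in carlesonSq a, ENNReal.ofReal ‖‖funA z‖ ^ 2 * (1 - ‖z‖ ^ 2) ^ 3‖
      ≤ ENNReal.ofReal (36 * π * (1 - a) / L ^ 2) :=
    calc ∫⁻ z in carlesonSq a, ENNReal.ofReal ‖‖funA z‖ ^ 2 * (1 - ‖z‖ ^ 2) ^ 3‖
        ≤ ∫⁻ z in carlesonSq a, ENNReal.ofReal (32 / L ^ 2) * ENNReal.ofReal (h z) := by
          refine setLIntegral_mono (by fun_prop) fun z hz => ?_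
          rw [← ENNReal.ofReal_mul (by positivity)]
          refine ENNReal.ofReal_le_ofReal ?_
          have hz1 := norm_lt_one_of_mem_carlesonSq hz
          rw [Real.norm_of_nonneg
            (mul_nonneg (by positivity) (pow_nonneg (by nlinarith [norm_nonneg z]) 3))]
          exact sq_norm_funA_mul_le ha0 ha1 hz
      _ ≤ ∫⁻ z in {z : ℂ | x₀ ≤ z.re ∧ z.re < 1},
            ENNReal.ofReal (32 / L ^ 2) * ENNReal.ofReal (h z) :=
          lintegral_mono_set fun z hz => ⟨mul_cos_le_re_of_mem_carlesonSq ha0 ha1 hz,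
            (Complex.re_le_norm z).trans_lt (norm_lt_one_of_mem_carlesonSq hz)⟩
      _ = ENNReal.ofReal (32 / L ^ 2) *
            ∫⁻ z in {z : ℂ | x₀ ≤ z.re ∧ z.re < 1}, ENNReal.ofReal (h z) :=
          lintegral_const_mul' _ _ ENNReal.ofReal_ne_top
      _ ≤ ENNReal.ofReal (32 / L ^ 2) * (ENNReal.ofReal (1 - x₀) * ENNReal.ofReal π) := by
          gcongr
          exact setLIntegral_strip_le x₀
      _ ≤ ENNReal.ofReal (36 * π * (1 - a) / L ^ 2) := by
          have hx₀ : x₀ ≤ a := mul_le_of_le_one_right ha0.le (cos_le_one _)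
          rw [← ENNReal.ofReal_mul (by linarith), ← ENNReal.ofReal_mul (by positivity)]
          refine ENNReal.ofReal_le_ofReal ?_
          rw [div_mul_eq_mul_div, div_le_div_iff_of_pos_right (by positivity)]
          nlinarith [one_sub_mul_cos_le ha0.le ha1.le, pi_pos]
  -- going through `‖∫ f‖ ≤ ∫⁻ ‖f‖` spares us the measurability of `funA`
  calc ∫ z in carlesonSq a, ‖funA z‖ ^ 2 * (1 - ‖z‖ ^ 2) ^ 3
      ≤ ‖∫ z in carlesonSq a, ‖funA z‖ ^ 2 * (1 - ‖z‖ ^ 2) ^ 3‖ := le_norm_self _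
    _ ≤ _ := norm_integral_le_lintegral_norm _
    _ ≤ _ := ENNReal.toReal_le_of_le_ofReal (by positivity) hlint

lemma norm_funA_ofReal {r : ℝ} (hr0 : 0 ≤ r) (hr1 : r < 1) :
    ‖funA r‖ = ((1 - r) ^ 2 * Real.log (exp 1 / (1 - r)))⁻¹ := by
  have hL := one_le_log_exp_one_div (b := 1 - r) (by linarith) (by linarith)
  rw [norm_funA, ← Complex.ofReal_one, ← Complex.ofReal_sub, ← Complex.ofReal_div,
    ← Complex.ofReal_log (by have := exp_pos 1; positivity), Complex.norm_real, Complex.norm_real,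
    norm_of_nonneg (by linarith), norm_of_nonneg (by linarith)]

lemma rpow_sub_one_le_weighted_norm_funA {r : ℝ} (hr0 : 0 ≤ r) (hr1 : r < 1) (α : ℝ) :
    Real.log (exp 1 / (1 - r)) ^ (α - 1) ≤
      ‖funA r‖ * (1 - ‖(r : ℂ)‖ ^ 2) ^ 2 * Real.log (exp 1 / (1 - ‖(r : ℂ)‖)) ^ α := by
  rw [Complex.norm_real, norm_of_nonneg hr0, norm_funA_ofReal hr0 hr1]
  set L := Real.log (exp 1 / (1 - r))
  have hL : 0 < L := one_le_log_exp_one_div (by linarith) (by linarith) |>.trans_lt' one_pos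
  have hpow : 0 ≤ L ^ (α - 1) := by positivity
  rw [show L ^ α = L ^ (α - 1) * L by rw [← rpow_add_one hL.ne']; ring_nf]
  have hr : (1 - r) ≠ 0 := by linarith
  calc L ^ (α - 1) ≤ (1 + r) ^ 2 * L ^ (α - 1) := le_mul_of_one_le_left hpow (by nlinarith)
    _ = _ := by field_simp; ring

theorem stmt4 :
    (∃ C : ℝ, ∀ a : ℝ, 0 < a → a < 1 →
      (Real.log (Real.exp 1 / (1 - a))) ^ 2 / (1 - a) *
        (π⁻¹ * ∫ z in carlesonSq (a : ℂ),
          ‖funA z‖ ^ 2 * (1 - ‖z‖ ^ 2) ^ 3 ∂MeasureTheory.volume) ≤ C) ∧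
    ∀ α : ℝ, 1 < α →
      ¬ ∃ C : ℝ, ∀ z ∈ ball (0 : ℂ) 1,
        ‖funA z‖ * (1 - ‖z‖ ^ 2) ^ 2 * (Real.log (Real.exp 1 / (1 - ‖z‖))) ^ α ≤ C := by
  refine ⟨⟨36, fun a ha0 ha1 => ?_⟩, fun α hα ⟨C, hC⟩ => ?_⟩
  · have hL := one_le_log_exp_one_div (b := 1 - a) (by linarith) (by linarith)
    have ha : 1 - a ≠ 0 := by linarith
    calc _ ≤ Real.log (exp 1 / (1 - a)) ^ 2 / (1 - a) *
          (π⁻¹ * (36 * π * (1 - a) / Real.log (exp 1 / (1 - a)) ^ 2)) := by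
          refine mul_le_mul_of_nonneg_left ?_ (div_nonneg (sq_nonneg _) (by linarith))
          exact mul_le_mul_of_nonneg_left (integral_carlesonSq_le ha0 ha1) (by positivity)
      _ = 36 := by field_simp
  · obtain ⟨M, hM1, hCM⟩ := ((Filter.eventually_ge_atTop 1).and
      ((tendsto_rpow_atTop (by linarith : 0 < α - 1)).eventually_gt_atTop C)).exists
    have hr0 : 0 ≤ 1 - exp (1 - M) := sub_nonneg.2 (exp_le_one_iff.2 (by linarith))
    have hr1 : 1 - exp (1 - M) < 1 := sub_lt_self _ (exp_pos _)
    have hball : ((1 - exp (1 - M) : ℝ) : ℂ) ∈ ball (0 : ℂ) 1 := by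
      rwa [mem_ball_zero_iff, Complex.norm_real, norm_of_nonneg hr0]
    have hLM : Real.log (exp 1 / (1 - (1 - exp (1 - M)))) = M := by
      rw [sub_sub_cancel (1 : ℝ), ← exp_sub, sub_sub_cancel (1 : ℝ), Real.log_exp]
    have := rpow_sub_one_le_weighted_norm_funA hr0 hr1 α
    rw [hLM] at this
    linarith [hC _ hball]
end

section
/- Let {n_k} ⊂ ℕ be a lacunary sequence, i.e., inf_k n_{k+1}/n_k > 1, and {a_k} ⊂ ℂ satisfy Σ_k |a_k|^2 (log n_k)^3 / n_k^4 < ∞. Then A(z) = Σ_k a_k z^{n_k} satisfies sup_{a∈D} (log(e/(1-|a|)))^2 (1-|a|)^{-1} ∫_{S_a} |A(z)|^2 (1-|z|^2)^3 dm(z) < ∞. -/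
/-!
Lacunarity and the coefficient condition give the growth bound
`|A(z)| ≲ t⁻² log (e / t) ^ (-3/2)` with `t = 1 - |z|`: since `|a_k| ≲ n_k² (log n_k) ^ (-3/2)`,
each term is `≲ t⁻² log (e / t) ^ (-3/2) · min (√(n_k t), 1 / √(n_k t))`, and along a lacunary
sequence these minima sum like two geometric series meeting where `n_k t ≈ 1`. Hence
`|A|² (1 - |z|²)³ ≲ 1 / (t log³ (e / t))`, a radial bound whose integral over the polar rectangle
`{|a| ≤ |z| < 1, |arg z - arg a| ≤ π (1 - |a|)} ⊇ S_a` is, after substituting `1 - r = e^{-x}`,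
`≲ (1 - |a|) / log² (e / (1 - |a|))`.
-/

open Metric Set Real

open Filter MeasureTheory Topology

lemma log_exp_one_div {t : ℝ} (ht : t ≠ 0) : log (exp 1 / t) = 1 - log t := by
  rw [log_div (exp_ne_zero 1) ht, log_exp]

lemma log_exp_one_div_pos {t : ℝ} (ht : 0 < t) (ht1 : t ≤ 1) : 0 < log (exp 1 / t) := by
  rw [log_exp_one_div ht.ne']
  linarith [log_nonpos ht.le ht1]

lemma mul_one_sub_log_le_mul_one_sub_log {t s : ℝ} (ht : 0 < t) (hts : t ≤ s) (hs : s ≤ 1) :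
    t * (1 - log t) ≤ s * (1 - log s) := by
  have hs0 : 0 < s := ht.trans_le hts
  have hlog : 1 - s / t ≤ log t - log s := by
    simpa [inv_div, log_div ht.ne' hs0.ne'] using one_sub_inv_le_log_of_pos (div_pos ht hs0)
  have hst : t * (1 - s / t) = t - s := by field_simp
  nlinarith [mul_le_mul_of_nonneg_left hlog ht.le, log_nonpos hs0.le hs]

lemma pow_three_le_six_mul_exp {x : ℝ} (hx : 0 ≤ x) : x ^ 3 ≤ 6 * exp x := by
  have h := pow_div_factorial_le_exp x hx 3
  rw [show ((Nat.factorial 3 : ℕ) : ℝ) = 6 by norm_num [Nat.factorial]] at h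
  linarith

lemma sq_mul_exp_neg_mul_sqrt_le {n t : ℝ} (hn : 1 ≤ n) (ht : 0 < t) (ht1 : t ≤ 1) :
    t ^ 2 * (n ^ 2 * exp (-(n * t))) * √((1 - log t) ^ 3)
      ≤ 6 * √((1 + log n) ^ 3) * min √(n * t) (√(n * t))⁻¹ := by
  have hn0 : 0 < n := one_pos.trans_le hn
  have hL : 0 ≤ 1 - log t := by linarith [log_nonpos ht.le ht1]
  set x := n * t with hx
  have hx0 : 0 < x := mul_pos hn0 ht
  have hlhs : t ^ 2 * (n ^ 2 * exp (-x)) = x ^ 2 * exp (-x) := by rw [hx]; ring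
  rw [hlhs]
  rcases le_or_gt 1 x with hx1 | hx1
  · have hsx : 1 ≤ √x := one_le_sqrt.2 hx1
    rw [min_eq_right ((inv_le_one_of_one_le₀ hsx).trans hsx)]
    have hlog : 1 - log t ≤ 1 + log n := by
      have : log (1 / n) ≤ log t := log_le_log (by positivity) ((div_le_iff₀ hn0).2 (by linarith))
      rw [one_div, log_inv] at this
      linarith
    have hexp : x ^ 2 * exp (-x) ≤ 6 * (√x)⁻¹ := by
      have h6 : x ^ 3 * exp (-x) ≤ 6 := by
        rw [exp_neg, ← div_eq_mul_inv, div_le_iff₀ (exp_pos x)]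
        exact pow_three_le_six_mul_exp hx0.le
      have hsqrt : √x ≤ x := (sqrt_le_left hx0.le).2 (by nlinarith)
      calc x ^ 2 * exp (-x) = x ^ 3 * exp (-x) / x := by field_simp
        _ ≤ 6 / x := by gcongr
        _ ≤ 6 / √x := by gcongr
        _ = 6 * (√x)⁻¹ := div_eq_mul_inv _ _
    calc x ^ 2 * exp (-x) * √((1 - log t) ^ 3) ≤ 6 * (√x)⁻¹ * √((1 + log n) ^ 3) := by
          gcongr
      _ = _ := by ring
  · have hsx : √x ≤ 1 := sqrt_le_one.2 hx1.le
    rw [min_eq_left (hsx.trans ((one_le_inv₀ (sqrt_pos.2 hx0)).2 hsx))]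
    have hxL : x * (1 - log t) ≤ 1 + log n := by
      have hmono := mul_one_sub_log_le_mul_one_sub_log ht ((le_div_iff₀ hn0).2 (by linarith))
        (div_le_one_of_le₀ hn (by linarith) : 1 / n ≤ 1)
      rw [one_div, log_inv] at hmono
      calc x * (1 - log t) = n * (t * (1 - log t)) := by ring
        _ ≤ n * (n⁻¹ * (1 - -log n)) := by gcongr
        _ = 1 + log n := by field_simp; ring
    calc x ^ 2 * exp (-x) * √((1 - log t) ^ 3) ≤ x ^ 2 * √((1 - log t) ^ 3) := by
          have : exp (-x) ≤ 1 := exp_le_one_iff.2 (by linarith)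
          have : 0 ≤ x ^ 2 * √((1 - log t) ^ 3) := by positivity
          nlinarith
      _ = √x * √((x * (1 - log t)) ^ 3) := by
          rw [← sqrt_mul hx0.le,
            show x * (x * (1 - log t)) ^ 3 = (x ^ 2) ^ 2 * (1 - log t) ^ 3 by ring,
            sqrt_mul (by positivity), sqrt_sq (by positivity)]
      _ ≤ √x * √((1 + log n) ^ 3) := by gcongr
      _ ≤ 6 * √((1 + log n) ^ 3) * √x := by
          nlinarith [sqrt_nonneg x, sqrt_nonneg ((1 + log n) ^ 3)]

section Lacunary

variable {u : ℕ → ℝ} {p : ℝ}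

lemma pow_mul_le_of_lacunary (hp : 0 ≤ p) (hlac : ∀ k, p * u k ≤ u (k + 1)) (i j : ℕ) :
    p ^ j * u i ≤ u (i + j) := by
  induction j with
  | zero => simp
  | succ j ih =>
    calc p ^ (j + 1) * u i = p * (p ^ j * u i) := by ring
      _ ≤ p * u (i + j) := by gcongr
      _ ≤ u (i + j + 1) := hlac _

/-- The terms below `1` decay geometrically backwards from the last of them, those above `1`
forwards from the first. -/
lemma summable_min_inv_and_tsum_le_of_lacunary (hu : ∀ k, 0 < u k) (hp : 1 < p)
    (hlac : ∀ k, p * u k ≤ u (k + 1)) :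
    Summable (fun k => min (u k) (u k)⁻¹) ∧ ∑' k, min (u k) (u k)⁻¹ ≤ 2 * (1 - p⁻¹)⁻¹ := by
  have hp0 : 0 < p := one_pos.trans hp
  set θ := p⁻¹
  have hθ0 : 0 ≤ θ := by positivity
  have hθ1 : θ < 1 := inv_lt_one_of_one_lt₀ hp
  have hgeom := summable_geometric_of_lt_one hθ0 hθ1
  set m := fun k => min (u k) (u k)⁻¹
  have hm0 : ∀ k, 0 ≤ m k := fun k => le_min (hu k).le (inv_nonneg.2 (hu k).le)
  have hex : ∃ k, 1 ≤ u k := by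
    obtain ⟨k, hk⟩ := pow_unbounded_of_one_lt (u 0)⁻¹ hp
    refine ⟨k, ?_⟩
    have := pow_mul_le_of_lacunary hp0.le hlac 0 k
    rw [zero_add] at this
    nlinarith [(inv_lt_iff_one_lt_mul₀ (hu 0)).1 hk]
  classical
  set k₀ := Nat.find hex
  have htail : ∀ i, m (i + k₀) ≤ θ ^ i := by
    intro i
    have h := pow_mul_le_of_lacunary hp0.le hlac k₀ i
    have hk₀ : 1 ≤ u k₀ := Nat.find_spec hex
    calc m (i + k₀) ≤ (u (k₀ + i))⁻¹ := by rw [add_comm]; exact min_le_right _ _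
      _ ≤ (p ^ i)⁻¹ := inv_anti₀ (by positivity) (by nlinarith [pow_pos hp0 i])
      _ = θ ^ i := (inv_pow p i).symm
  have hhead : ∀ k < k₀, m k ≤ θ ^ (k₀ - 1 - k) := by
    intro k hk
    have h := pow_mul_le_of_lacunary hp0.le hlac k (k₀ - 1 - k)
    rw [show k + (k₀ - 1 - k) = k₀ - 1 by omega] at h
    have hlt : u (k₀ - 1) < 1 := not_le.1 (Nat.find_min hex (by omega))
    calc m k ≤ u k := min_le_left _ _
      _ ≤ (p ^ (k₀ - 1 - k))⁻¹ := by
          rw [← one_div, le_div_iff₀ (by positivity)]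
          linarith
      _ = θ ^ (k₀ - 1 - k) := (inv_pow p _).symm
  have hsum_tail : Summable (fun i => m (i + k₀)) := hgeom.of_nonneg_of_le (fun i => hm0 _) htail
  have hsum : Summable m := (summable_nat_add_iff k₀).1 hsum_tail
  refine ⟨hsum, ?_⟩
  rw [← hsum.sum_add_tsum_nat_add k₀, two_mul, ← tsum_geometric_of_lt_one hθ0 hθ1]
  refine add_le_add ?_ (hsum_tail.tsum_le_tsum htail hgeom)
  calc ∑ k ∈ Finset.range k₀, m k ≤ ∑ k ∈ Finset.range k₀, θ ^ (k₀ - 1 - k) :=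
        Finset.sum_le_sum fun k hk => hhead k (Finset.mem_range.1 hk)
    _ = ∑ k ∈ Finset.range k₀, θ ^ k := Finset.sum_range_reflect (θ ^ ·) k₀
    _ ≤ ∑' k, θ ^ k := hgeom.sum_le_tsum _ fun k _ => by positivity

end Lacunary

lemma strictMono_of_lacunary {n : ℕ → ℕ} {q : ℝ} (hn : ∀ k, 1 ≤ n k) (hq : 1 < q)
    (hlac : ∀ k, q * (n k : ℝ) ≤ (n (k + 1) : ℝ)) : StrictMono n :=
  strictMono_nat_of_lt_succ fun k => by
    have : (0 : ℝ) < n k := by exact_mod_cast hn k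
    exact_mod_cast (lt_mul_of_one_lt_left this hq).trans_le (hlac k)

lemma exists_norm_mul_sqrt_le_of_summable {n : ℕ → ℕ} {a : ℕ → ℂ} (hn : ∀ k, 1 ≤ n k)
    (hn_top : Tendsto n atTop atTop)
    (hsum : Summable fun k => ‖a k‖ ^ 2 * (log (n k)) ^ 3 / (n k : ℝ) ^ 4) :
    ∃ D, ∀ k, ‖a k‖ * √((1 + log (n k)) ^ 3) ≤ D * (n k : ℝ) ^ 2 := by
  set g := fun k => ‖a k‖ ^ 2 * (1 + log (n k)) ^ 3 / (n k : ℝ) ^ 4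
  have hg0 : ∀ k, 0 ≤ g k := fun k => by
    have := log_natCast_nonneg (n k)
    positivity
  have hg_le : ∀ᶠ k in atTop, g k ≤ 8 * (‖a k‖ ^ 2 * (log (n k)) ^ 3 / (n k : ℝ) ^ 4) := by
    filter_upwards [hn_top.eventually_ge_atTop 3] with k hk
    have hlog : 1 ≤ log (n k) := by
      rw [← log_exp 1]
      have h3 : (3 : ℝ) ≤ n k := by exact_mod_cast hk
      exact log_le_log (exp_pos 1) ((exp_one_lt_d9.trans_le (by norm_num)).le.trans h3)
    have : (1 + log (n k)) ^ 3 ≤ 8 * log (n k) ^ 3 := by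
      calc (1 + log (n k)) ^ 3 ≤ (2 * log (n k)) ^ 3 := by gcongr; linarith
        _ = 8 * log (n k) ^ 3 := by ring
    calc g k ≤ ‖a k‖ ^ 2 * (8 * log (n k) ^ 3) / (n k : ℝ) ^ 4 := by simp only [g]; gcongr
      _ = _ := by ring
  have hg_tendsto : Tendsto g atTop (𝓝 0) := by
    have := hsum.tendsto_atTop_zero.const_mul 8
    rw [mul_zero] at this
    exact squeeze_zero' (Eventually.of_forall hg0) hg_le this
  obtain ⟨D, hD⟩ := hg_tendsto.bddAbove_range
  refine ⟨√D, fun k => ?_⟩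
  have hnk : (0 : ℝ) < (n k : ℝ) ^ 4 := by have := hn k; positivity
  have hgk : ‖a k‖ ^ 2 * (1 + log (n k)) ^ 3 ≤ D * (n k : ℝ) ^ 4 :=
    (div_le_iff₀ hnk).1 (hD (mem_range_self k))
  calc ‖a k‖ * √((1 + log (n k)) ^ 3) = √(‖a k‖ ^ 2 * (1 + log (n k)) ^ 3) := by
        rw [sqrt_mul (sq_nonneg _), sqrt_sq (norm_nonneg _)]
    _ ≤ √(D * ((n k : ℝ) ^ 2) ^ 2) := by rw [← pow_mul]; exact sqrt_le_sqrt hgk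
    _ = √D * (n k : ℝ) ^ 2 := by rw [sqrt_mul' _ (sq_nonneg _), sqrt_sq (by positivity)]

lemma norm_tsum_mul_pow_le_of_lacunary {n : ℕ → ℕ} {a : ℕ → ℂ} {q D : ℝ} (hn : ∀ k, 1 ≤ n k)
    (hq : 1 < q) (hlac : ∀ k, q * (n k : ℝ) ≤ (n (k + 1) : ℝ))
    (hD : ∀ k, ‖a k‖ * √((1 + log (n k)) ^ 3) ≤ D * (n k : ℝ) ^ 2) {z : ℂ} (hz : ‖z‖ < 1) :
    (1 - ‖z‖) ^ 2 * √((log (exp 1 / (1 - ‖z‖))) ^ 3) * ‖∑' k, a k * z ^ n k‖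
      ≤ 12 * D * (1 - (√q)⁻¹)⁻¹ := by
  set t := 1 - ‖z‖
  have ht : 0 < t := by simp only [t]; linarith
  have ht1 : t ≤ 1 := by simp only [t]; linarith [norm_nonneg z]
  rw [log_exp_one_div ht.ne']
  set W := t ^ 2 * √((1 - log t) ^ 3)
  have hW : 0 < W :=
    mul_pos (pow_pos ht 2) (sqrt_pos.2 (pow_pos (by linarith [log_nonpos ht.le ht1]) 3))
  have hnk : ∀ k, (1 : ℝ) ≤ n k := fun k => by exact_mod_cast hn k
  have hD0 : 0 ≤ D := by
    have := (mul_nonneg (norm_nonneg (a 0)) (sqrt_nonneg _)).trans (hD 0)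
    exact nonneg_of_mul_nonneg_left this (pow_pos (one_pos.trans_le (hnk 0)) 2)
  set m := fun k => min √((n k : ℝ) * t) (√((n k : ℝ) * t))⁻¹
  obtain ⟨hm_sum, hm_le⟩ := summable_min_inv_and_tsum_le_of_lacunary
    (u := fun k => √((n k : ℝ) * t)) (p := √q)
    (fun k => sqrt_pos.2 (mul_pos (one_pos.trans_le (hnk k)) ht))
    ((lt_sqrt zero_le_one).2 (by simpa using hq))
    (fun k => by
      rw [← sqrt_mul (by linarith), ← mul_assoc]
      exact sqrt_le_sqrt (by gcongr; exact hlac k))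
  have hterm : ∀ k, W * ‖a k * z ^ n k‖ ≤ 6 * D * m k := by
    intro k
    have hz_exp : ‖z‖ ^ n k ≤ exp (-((n k : ℝ) * t)) :=
      calc ‖z‖ ^ n k ≤ exp (-t) ^ n k :=
            pow_le_pow_left₀ (norm_nonneg z) (by linarith [add_one_le_exp (-t)]) _
        _ = exp (-((n k : ℝ) * t)) := by rw [← exp_nat_mul]; ring_nf
    refine le_of_mul_le_mul_right ?_ (pow_pos (one_pos.trans_le (hnk k)) 2)
    calc W * ‖a k * z ^ n k‖ * (n k : ℝ) ^ 2 = ‖a k‖ * (W * ((n k : ℝ) ^ 2 * ‖z‖ ^ n k)) := by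
          rw [norm_mul, norm_pow]; ring
      _ ≤ ‖a k‖ * (W * ((n k : ℝ) ^ 2 * exp (-((n k : ℝ) * t)))) := by gcongr
      _ = ‖a k‖ * (t ^ 2 * ((n k : ℝ) ^ 2 * exp (-((n k : ℝ) * t))) * √((1 - log t) ^ 3)) := by
          simp only [W]; ring
      _ ≤ ‖a k‖ * (6 * √((1 + log (n k)) ^ 3) * m k) :=
          mul_le_mul_of_nonneg_left (sq_mul_exp_neg_mul_sqrt_le (hnk k) ht ht1) (norm_nonneg _)
      _ = 6 * (‖a k‖ * √((1 + log (n k)) ^ 3)) * m k := by ring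
      _ ≤ 6 * (D * (n k : ℝ) ^ 2) * m k := by have := hD k; gcongr
      _ = 6 * D * m k * (n k : ℝ) ^ 2 := by ring
  have hsum : Summable fun k => ‖a k * z ^ n k‖ :=
    (hm_sum.mul_left (6 * D / W)).of_nonneg_of_le (fun _ => norm_nonneg _) fun k => by
      rw [div_mul_eq_mul_div, le_div_iff₀ hW, mul_comm]
      exact hterm k
  calc W * ‖∑' k, a k * z ^ n k‖ ≤ ∑' k, W * ‖a k * z ^ n k‖ := by
        rw [tsum_mul_left]
        exact mul_le_mul_of_nonneg_left (norm_tsum_le_tsum_norm hsum) hW.le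
    _ ≤ ∑' k, 6 * D * m k := (hsum.mul_left W).tsum_le_tsum hterm (hm_sum.mul_left _)
    _ = 6 * D * ∑' k, m k := tsum_mul_left
    _ ≤ 12 * D * (1 - (√q)⁻¹)⁻¹ := by
        rw [show 12 * D * (1 - (√q)⁻¹)⁻¹ = 6 * D * (2 * (1 - (√q)⁻¹)⁻¹) by ring]
        exact mul_le_mul_of_nonneg_left hm_le (by positivity)

lemma lintegral_Ioi_inv_one_add_pow_three {a : ℝ} (ha : 0 ≤ a) :
    ∫⁻ x in Ioi a, ENNReal.ofReal ((1 + x) ^ 3)⁻¹ = ENNReal.ofReal (2 * (1 + a) ^ 2)⁻¹ := by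
  set g := fun x : ℝ => -(2 * (1 + x) ^ 2)⁻¹
  have hderiv : ∀ x ∈ Ici a, HasDerivAt g ((1 + x) ^ 3)⁻¹ x := by
    intro x hx
    have hx1 : 1 + x ≠ 0 := by have : a ≤ x := hx; linarith
    have h := ((((hasDerivAt_id' x).const_add 1).pow 2).const_mul 2).inv
      (mul_ne_zero two_ne_zero (pow_ne_zero 2 hx1))
    exact h.neg.congr_deriv (by simp only [Pi.pow_apply]; field_simp; ring)
  have hpos : ∀ x ∈ Ioi a, 0 ≤ ((1 + x) ^ 3)⁻¹ := fun x hx => by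
    have : a < x := hx; have : 0 < 1 + x := by linarith
    positivity
  have hlim : Tendsto g atTop (𝓝 0) := by
    have : Tendsto (fun x : ℝ => 2 * (1 + x) ^ 2) atTop atTop :=
      (tendsto_pow_atTop two_ne_zero).comp (tendsto_atTop_add_const_left _ 1 tendsto_id)
        |>.const_mul_atTop two_pos
    have := this.inv_tendsto_atTop.neg
    rwa [neg_zero] at this
  rw [← ofReal_integral_eq_lintegral_ofReal (integrableOn_Ioi_deriv_of_nonneg' hderiv hpos hlim)
      ((ae_restrict_iff' measurableSet_Ioi).2 (ae_of_all _ hpos)),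
    integral_Ioi_of_hasDerivAt_of_nonneg' hderiv hpos hlim]
  simp [g]

lemma lintegral_Ico_inv_mul_one_sub_log_pow_three_le {ρ : ℝ} (hρ0 : 0 ≤ ρ) (hρ1 : ρ < 1) :
    ∫⁻ r in Ico ρ 1, ENNReal.ofReal (((1 - r) * (1 - log (1 - r)) ^ 3)⁻¹)
      ≤ ENNReal.ofReal ((2 * (1 - log (1 - ρ)) ^ 2)⁻¹) := by
  set a := -log (1 - ρ)
  have ha : 0 ≤ a := neg_nonneg.2 (log_nonpos (by linarith) (by linarith))
  set f := fun x : ℝ => 1 - exp (-x)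
  have himage : Ico ρ 1 ⊆ f '' Ici a := by
    rintro r ⟨hρr, hr1⟩
    refine ⟨-log (1 - r), neg_le_neg (log_le_log (by linarith) (by linarith)), ?_⟩
    simp [f, exp_log (sub_pos.2 hr1)]
  have hf' : ∀ x ∈ Ici a, HasDerivWithinAt f (exp (-x)) (Ici a) x := fun x _ => by
    simpa [f] using ((hasDerivAt_neg x).exp.const_sub 1).hasDerivWithinAt
  have hinj : InjOn f (Ici a) := fun x _ y _ h => by simpa [f] using h
  calc ∫⁻ r in Ico ρ 1, ENNReal.ofReal (((1 - r) * (1 - log (1 - r)) ^ 3)⁻¹)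
      ≤ ∫⁻ r in f '' Ici a, ENNReal.ofReal (((1 - r) * (1 - log (1 - r)) ^ 3)⁻¹) :=
        lintegral_mono_set himage
    _ = ∫⁻ x in Ici a, ENNReal.ofReal ((1 + x) ^ 3)⁻¹ := by
        rw [lintegral_image_eq_lintegral_abs_deriv_mul measurableSet_Ici hf' hinj]
        refine setLIntegral_congr_fun measurableSet_Ici fun x _ => ?_
        rw [abs_of_pos (exp_pos _), ← ENNReal.ofReal_mul (exp_pos _).le]
        simp only [f, sub_sub_cancel, log_exp]
        rw [mul_inv, ← mul_assoc, mul_inv_cancel₀ (exp_ne_zero _), one_mul, sub_neg_eq_add]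
    _ = ENNReal.ofReal ((2 * (1 - log (1 - ρ)) ^ 2)⁻¹) := by
        rw [setLIntegral_congr Ioi_ae_eq_Ici.symm, lintegral_Ioi_inv_one_add_pow_three ha,
          sub_eq_add_neg]

def polarRect (ρ φ w : ℝ) : Set ℂ := {z | ρ ≤ ‖z‖ ∧ ‖z‖ < 1 ∧ |Complex.arg z - φ| ≤ w}

lemma measurableSet_polarRect (ρ φ w : ℝ) : MeasurableSet (polarRect ρ φ w) := by
  unfold polarRect
  measurability

lemma setLIntegral_polarRect_le (F : ℝ → ENNReal) (ρ φ w : ℝ) :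
    ∫⁻ z in polarRect ρ φ w, F ‖z‖ ≤ ENNReal.ofReal (2 * w) * ∫⁻ r in Ico ρ 1, F r := by
  set G := fun p : ℝ × ℝ => (Ico ρ 1).indicator F p.1 * (Icc (φ - w) (φ + w)).indicator 1 p.2
  have hG : ∀ p ∈ Complex.polarCoord.target,
      ENNReal.ofReal p.1 • (polarRect ρ φ w).indicator (fun z => F ‖z‖) (Complex.polarCoord.symm p)
        ≤ G p := by
    intro p hp
    have hpolar := Complex.polarCoord.right_inv hp
    rw [Complex.polarCoord_apply] at hpolar
    have hnorm : ‖Complex.polarCoord.symm p‖ = p.1 := congrArg Prod.fst hpolar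
    have harg : (Complex.polarCoord.symm p).arg = p.2 := congrArg Prod.snd hpolar
    by_cases hmem : Complex.polarCoord.symm p ∈ polarRect ρ φ w
    · rw [indicator_of_mem hmem, hnorm, smul_eq_mul]
      obtain ⟨h1, h2, h3⟩ := hmem
      rw [hnorm] at h1 h2
      rw [harg, abs_le] at h3
      simp only [G, indicator_of_mem (show p.1 ∈ Ico ρ 1 from ⟨h1, h2⟩),
        indicator_of_mem (show p.2 ∈ Icc (φ - w) (φ + w) from ⟨by linarith, by linarith⟩),
        Pi.one_apply, mul_one]
      exact mul_le_of_le_one_left' (ENNReal.ofReal_le_one.2 h2.le)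
    · rw [indicator_of_notMem hmem, smul_zero]
      exact zero_le
  calc ∫⁻ z in polarRect ρ φ w, F ‖z‖
      = ∫⁻ z, (polarRect ρ φ w).indicator (fun z => F ‖z‖) z :=
        (lintegral_indicator (measurableSet_polarRect ρ φ w) _).symm
    _ = ∫⁻ p in Complex.polarCoord.target, ENNReal.ofReal p.1 •
          (polarRect ρ φ w).indicator (fun z => F ‖z‖) (Complex.polarCoord.symm p) :=
        (Complex.lintegral_comp_polarCoord_symm _).symm
    _ ≤ ∫⁻ p in Complex.polarCoord.target, G p :=
        setLIntegral_mono' Complex.polarCoord.open_target.measurableSet hG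
    _ ≤ ∫⁻ p, G p := setLIntegral_le_lintegral _ _
    _ ≤ ∫⁻ r, ∫⁻ θ, G (r, θ) := by rw [Measure.volume_eq_prod]; exact lintegral_prod_le _
    _ = ∫⁻ r, (Ico ρ 1).indicator F r * ENNReal.ofReal (2 * w) := by
        congr 1 with r
        simp only [G]
        rw [lintegral_const_mul _ (measurable_one.indicator measurableSet_Icc),
          lintegral_indicator_one measurableSet_Icc, Real.volume_Icc]
        ring_nf
    _ = ENNReal.ofReal (2 * w) * ∫⁻ r in Ico ρ 1, F r := by
        rw [lintegral_mul_const' _ _ ENNReal.ofReal_ne_top, lintegral_indicator measurableSet_Ico,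
          mul_comm]

/-- The width `π (1 - ‖b‖)` also covers `b = 0`, where the Carleson square is the whole disc. -/
lemma carlesonSq_subset_polarRect {b : ℂ} (hb : ‖b‖ < 1) :
    carlesonSq b ⊆ polarRect ‖b‖ (Complex.arg b) (π * (1 - ‖b‖)) := by
  intro z hz
  unfold carlesonSq at hz
  split_ifs at hz with hb0
  · subst hb0
    simpa [polarRect] using ⟨mem_ball_zero_iff.1 hz, Complex.abs_arg_le_pi z⟩
  · obtain ⟨h1, h2, h3⟩ := hz
    refine ⟨h1.le, h2, h3.trans ?_⟩
    nlinarith [pi_gt_three]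

lemma integral_carlesonSq_le_s5 {g : ℂ → ℝ} {K : ℝ} (hK : 0 ≤ K) {b : ℂ} (hb : ‖b‖ < 1)
    (hg : ∀ z ∈ carlesonSq b, ‖g z‖ ≤ K * ((1 - ‖z‖) * log (exp 1 / (1 - ‖z‖)) ^ 3)⁻¹) :
    π⁻¹ * ∫ z in carlesonSq b, g z ≤ K * (1 - ‖b‖) / log (exp 1 / (1 - ‖b‖)) ^ 2 := by
  have hT : 0 < 1 - ‖b‖ := by linarith
  have hL := log_exp_one_div_pos hT (by linarith [norm_nonneg b])
  set h := fun r : ℝ => ENNReal.ofReal (((1 - r) * (1 - log (1 - r)) ^ 3)⁻¹)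
  have hsub := carlesonSq_subset_polarRect hb
  have hgh : ∀ z ∈ carlesonSq b, ENNReal.ofReal ‖g z‖ ≤ ENNReal.ofReal K * h ‖z‖ := by
    intro z hz
    have hz1 : 1 - ‖z‖ ≠ 0 := by linarith [(hsub hz).2.1]
    rw [← ENNReal.ofReal_mul hK, ← log_exp_one_div hz1]
    exact ENNReal.ofReal_le_ofReal (hg z hz)
  have hlint : ∫⁻ z in carlesonSq b, ENNReal.ofReal ‖g z‖
      ≤ ENNReal.ofReal (K * (2 * (π * (1 - ‖b‖)) * (2 * log (exp 1 / (1 - ‖b‖)) ^ 2)⁻¹)) :=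
    calc ∫⁻ z in carlesonSq b, ENNReal.ofReal ‖g z‖
        ≤ ∫⁻ z in carlesonSq b, ENNReal.ofReal K * h ‖z‖ :=
          setLIntegral_mono (by fun_prop) hgh
      _ ≤ ∫⁻ z in polarRect ‖b‖ (Complex.arg b) (π * (1 - ‖b‖)), ENNReal.ofReal K * h ‖z‖ :=
          lintegral_mono_set hsub
      _ = ENNReal.ofReal K * ∫⁻ z in polarRect ‖b‖ (Complex.arg b) (π * (1 - ‖b‖)), h ‖z‖ :=
          lintegral_const_mul' _ _ ENNReal.ofReal_ne_top
      _ ≤ ENNReal.ofReal K * (ENNReal.ofReal (2 * (π * (1 - ‖b‖))) * ∫⁻ r in Ico ‖b‖ 1, h r) := by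
          gcongr; exact setLIntegral_polarRect_le h _ _ _
      _ ≤ ENNReal.ofReal K * (ENNReal.ofReal (2 * (π * (1 - ‖b‖)))
            * ENNReal.ofReal ((2 * log (exp 1 / (1 - ‖b‖)) ^ 2)⁻¹)) := by
          rw [log_exp_one_div hT.ne']
          gcongr
          exact lintegral_Ico_inv_mul_one_sub_log_pow_three_le (norm_nonneg b) hb
      _ = _ := by rw [← ENNReal.ofReal_mul (by positivity), ← ENNReal.ofReal_mul hK]
  calc π⁻¹ * ∫ z in carlesonSq b, g z ≤ π⁻¹ * ‖∫ z in carlesonSq b, g z‖ := by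
        gcongr; exact le_abs_self _
    _ ≤ π⁻¹ * (K * (2 * (π * (1 - ‖b‖)) * (2 * log (exp 1 / (1 - ‖b‖)) ^ 2)⁻¹)) := by
        gcongr
        exact (norm_integral_le_lintegral_norm g).trans
          (ENNReal.toReal_le_of_le_ofReal (by positivity) hlint)
    _ = K * (1 - ‖b‖) / log (exp 1 / (1 - ‖b‖)) ^ 2 := by field_simp

lemma sq_mul_one_sub_sq_pow_three_le {x r L M : ℝ} (hx : 0 ≤ x) (hr : 0 ≤ r) (hr1 : r < 1)
    (hL : 0 < L) (h : (1 - r) ^ 2 * √(L ^ 3) * x ≤ M) :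
    x ^ 2 * (1 - r ^ 2) ^ 3 ≤ 8 * M ^ 2 * ((1 - r) * L ^ 3)⁻¹ := by
  have ht : 0 < 1 - r := by linarith
  have hsq : ((1 - r) ^ 2 * √(L ^ 3) * x) ^ 2 = (1 - r) ^ 4 * L ^ 3 * x ^ 2 := by
    rw [mul_pow, mul_pow, sq_sqrt (by positivity)]; ring
  have hM : (1 - r) ^ 4 * L ^ 3 * x ^ 2 ≤ M ^ 2 := hsq ▸ pow_le_pow_left₀ (by positivity) h 2
  have hfac : (1 - r ^ 2) ^ 3 ≤ 8 * (1 - r) ^ 3 := by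
    calc (1 - r ^ 2) ^ 3 ≤ (2 * (1 - r)) ^ 3 := by gcongr <;> nlinarith
      _ = 8 * (1 - r) ^ 3 := by ring
  rw [← div_eq_mul_inv, le_div_iff₀ (by positivity)]
  calc x ^ 2 * (1 - r ^ 2) ^ 3 * ((1 - r) * L ^ 3)
      ≤ x ^ 2 * (8 * (1 - r) ^ 3) * ((1 - r) * L ^ 3) := by gcongr
    _ = 8 * ((1 - r) ^ 4 * L ^ 3 * x ^ 2) := by ring
    _ ≤ 8 * M ^ 2 := by gcongr

theorem stmt5 (n : ℕ → ℕ) (a : ℕ → ℂ)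
    (hn : ∀ k, 1 ≤ n k)
    (hlac : ∃ q : ℝ, 1 < q ∧ ∀ k, q * (n k : ℝ) ≤ (n (k + 1) : ℝ))
    (hsum : Summable fun k => ‖a k‖ ^ 2 * (Real.log (n k)) ^ 3 / (n k : ℝ) ^ 4) :
    ∃ C : ℝ, ∀ b ∈ ball (0 : ℂ) 1,
      (Real.log (Real.exp 1 / (1 - ‖b‖))) ^ 2 / (1 - ‖b‖) *
        (π⁻¹ * ∫ z in carlesonSq b,
          ‖∑' k, a k * z ^ (n k)‖ ^ 2 * (1 - ‖z‖ ^ 2) ^ 3 ∂MeasureTheory.volume) ≤ C := by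
  obtain ⟨q, hq, hlac⟩ := hlac
  obtain ⟨D, hD⟩ := exists_norm_mul_sqrt_le_of_summable hn
    (strictMono_of_lacunary hn hq hlac).tendsto_atTop hsum
  set M := 12 * D * (1 - (√q)⁻¹)⁻¹
  refine ⟨8 * M ^ 2, fun b hb => ?_⟩
  rw [mem_ball_zero_iff] at hb
  have hT : 0 < 1 - ‖b‖ := by linarith
  have hL : 0 < log (exp 1 / (1 - ‖b‖)) := log_exp_one_div_pos hT (by linarith [norm_nonneg b])
  have hgrowth : ∀ z ∈ carlesonSq b, ‖‖∑' k, a k * z ^ n k‖ ^ 2 * (1 - ‖z‖ ^ 2) ^ 3‖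
      ≤ 8 * M ^ 2 * ((1 - ‖z‖) * log (exp 1 / (1 - ‖z‖)) ^ 3)⁻¹ := by
    intro z hz
    have hz1 : ‖z‖ < 1 := (carlesonSq_subset_polarRect hb hz).2.1
    rw [norm_of_nonneg (mul_nonneg (sq_nonneg _) (pow_nonneg (by nlinarith [norm_nonneg z]) 3))]
    exact sq_mul_one_sub_sq_pow_three_le (norm_nonneg _) (norm_nonneg z) hz1
      (log_exp_one_div_pos (by linarith) (by linarith [norm_nonneg z]))
      (norm_tsum_mul_pow_le_of_lacunary hn hq hlac hD hz1)
  calc log (exp 1 / (1 - ‖b‖)) ^ 2 / (1 - ‖b‖) *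
        (π⁻¹ * ∫ z in carlesonSq b, ‖∑' k, a k * z ^ n k‖ ^ 2 * (1 - ‖z‖ ^ 2) ^ 3)
      ≤ log (exp 1 / (1 - ‖b‖)) ^ 2 / (1 - ‖b‖) *
        (8 * M ^ 2 * (1 - ‖b‖) / log (exp 1 / (1 - ‖b‖)) ^ 2) := by
        gcongr
        exact integral_carlesonSq_le_s5 (by positivity) hb hgrowth
    _ = 8 * M ^ 2 := by field_simp
end

section
/- Let ω be a normalized radial weight of class R on the unit disc and A analytic in D. If the integral operator S_A(f)(z) = ∫_0^z (∫_0^ζ f(w)A(w) dw) dζ is bounded on the Bloch space B, then A ∈ L_1, i.e., sup_{z∈D} |A(z)|(1-|z|^2)^2 log(e/(1-|z|)) < ∞. -/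
open Metric Set Real MeasureTheory

/-- `ω̂(r) = ∫_r^1 ω(s) ds`. -/
noncomputable def omegaHat (ω : ℝ → ℝ) (r : ℝ) : ℝ := ∫ s in r..1, ω s

/-- The derivative of `S_A(f)` at `z`, i.e. `∫_0^z f(w) A(w) dw` parametrized along the
segment from the origin. -/
noncomputable def SAprime (A f : ℂ → ℂ) (z : ℂ) : ℂ :=
  z * ∫ t in (0 : ℝ)..1, f ((t : ℂ) * z) * A ((t : ℂ) * z)

/-!
Test the boundedness of `S_A` on `f_z(w) = log (e / (1 - z̄ w))`, whose Bloch norm is at most `2`.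
Then `g = S_A(f_z)'` satisfies `|g(w)| (1 - |w|²) ≤ 2C`, and Cauchy's estimate on a disc of radius
`(1 - |z|) / 2` gives `|f_z(z) A(z)| (1 - |z|²)² = |g'(z)| (1 - |z|²)² ≤ 32C`. Finally
`|f_z(z)| = log (e / (1 - |z|²))` dominates `log (e / (1 - |z|)) / 2`.
-/

open ComplexConjugate

noncomputable def radialPrimitive (h : ℂ → ℂ) (z : ℂ) : ℂ :=
  z * ∫ t in (0 : ℝ)..1, h ((t : ℂ) * z)

lemma ofReal_mul_mem_ball_zero {r t : ℝ} {w : ℂ} (hw : w ∈ ball (0 : ℂ) r)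
    (ht : t ∈ Icc (0 : ℝ) 1) :
    (t : ℂ) * w ∈ ball (0 : ℂ) r := by
  rw [mem_ball_zero_iff, norm_mul, Complex.norm_real, Real.norm_of_nonneg ht.1] at *
  nlinarith [norm_nonneg w, ht.2]

lemma radialPrimitive_eq_of_hasDerivAt {h F : ℂ → ℂ} {r : ℝ}
    (hh : ContinuousOn h (ball 0 r)) (hF : ∀ w ∈ ball (0 : ℂ) r, HasDerivAt F (h w) w)
    {w : ℂ} (hw : w ∈ ball (0 : ℂ) r) :
    radialPrimitive h w = F w - F 0 := by
  have hderiv : ∀ t ∈ uIcc (0 : ℝ) 1,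
      HasDerivAt (fun s : ℝ => F (s * w)) (w * h (t * w)) t := by
    intro t ht
    rw [uIcc_of_le zero_le_one] at ht
    have := (hF _ (ofReal_mul_mem_ball_zero hw ht)).comp (t : ℂ)
      ((hasDerivAt_id (t : ℂ)).mul_const w)
    simpa [mul_comm] using this.comp_ofReal
  have hcont : ContinuousOn (fun t : ℝ => w * h (t * w)) (Icc 0 1) :=
    continuousOn_const.mul (hh.comp (by fun_prop) fun t ht => ofReal_mul_mem_ball_zero hw ht)
  rw [radialPrimitive, ← intervalIntegral.integral_const_mul,
    intervalIntegral.integral_eq_sub_of_hasDerivAt hderiv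
      (hcont.intervalIntegrable_of_Icc zero_le_one)]
  simp

lemma hasDerivAt_radialPrimitive {h : ℂ → ℂ} {r : ℝ} (hh : DifferentiableOn ℂ h (ball 0 r))
    {z : ℂ} (hz : z ∈ ball (0 : ℂ) r) :
    HasDerivAt (radialPrimitive h) (h z) z := by
  obtain ⟨F, hF⟩ := hh.isExactOn_ball
  have hEq : (fun w => F w - F 0) =ᶠ[nhds z] radialPrimitive h :=
    Filter.eventually_of_mem (isOpen_ball.mem_nhds hz) fun w hw =>
      (radialPrimitive_eq_of_hasDerivAt hh.continuousOn hF hw).symm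
  exact ((hF z hz).sub_const (F 0)).congr_of_eventuallyEq hEq.symm

/-- Cauchy's estimate on the circle of radius `(1 - ‖z‖) / 2` about `z`. -/
lemma norm_deriv_mul_one_sub_sq_sq_le {g : ℂ → ℂ} {K : ℝ}
    (hg : DifferentiableOn ℂ g (ball 0 1))
    (hK : ∀ w ∈ ball (0 : ℂ) 1, ‖g w‖ * (1 - ‖w‖ ^ 2) ≤ K) {z : ℂ} (hz : z ∈ ball (0 : ℂ) 1) :
    ‖deriv g z‖ * (1 - ‖z‖ ^ 2) ^ 2 ≤ 16 * K := by
  rw [mem_ball_zero_iff] at hz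
  set R := (1 - ‖z‖) / 2 with hR_def
  have hR : 0 < R := by positivity [sub_pos.2 hz]
  have hsub : closedBall z R ⊆ ball 0 1 := fun w hw => by
    rw [mem_closedBall, dist_eq_norm] at hw
    rw [mem_ball_zero_iff]
    linarith [norm_le_norm_add_norm_sub' w z]
  have hsphere : ∀ w ∈ sphere z R, ‖g w‖ ≤ K / R := fun w hw => by
    have hw1 := mem_ball_zero_iff.1 (hsub (sphere_subset_closedBall hw))
    have hRw : R ≤ 1 - ‖w‖ ^ 2 := by
      rw [mem_sphere, dist_eq_norm] at hw
      nlinarith [norm_le_norm_add_norm_sub' w z, norm_nonneg w]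
    rw [le_div_iff₀ hR]
    exact (mul_le_mul_of_nonneg_left hRw (norm_nonneg _)).trans
      (hK w (mem_ball_zero_iff.2 hw1))
  have hCauchy : ‖deriv g z‖ ≤ K / R / R :=
    Complex.norm_deriv_le_of_forall_mem_sphere_norm_le hR
      ((hg.mono (closure_ball z hR.ne' ▸ hsub)).diffContOnCl) hsphere
  have hD : (1 - ‖z‖ ^ 2) ^ 2 ≤ 16 * R ^ 2 := by
    have h4 : 0 ≤ (1 - ‖z‖) ^ 2 * (4 - (1 + ‖z‖) ^ 2) :=
      mul_nonneg (sq_nonneg _) (by nlinarith [norm_nonneg z])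
    rw [hR_def]
    nlinarith
  calc ‖deriv g z‖ * (1 - ‖z‖ ^ 2) ^ 2 ≤ K / R / R * (16 * R ^ 2) :=
        mul_le_mul hCauchy hD (sq_nonneg _) ((norm_nonneg _).trans hCauchy)
    _ = 16 * K := by field_simp

/-- The test function `f_ζ(w) = log (e / (1 - conj ζ * w))`. -/
noncomputable def logKernel (ζ w : ℂ) : ℂ := 1 - Complex.log (1 - conj ζ * w)

section logKernel

variable {ζ w : ℂ}

lemma one_sub_conj_mul_mem_slitPlane (hζ : ‖ζ‖ ≤ 1) (hw : ‖w‖ < 1) :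
    1 - conj ζ * w ∈ Complex.slitPlane := by
  have : ‖conj ζ * w‖ < 1 := by
    rw [norm_mul, Complex.norm_conj]
    nlinarith [norm_nonneg ζ, norm_nonneg w]
  left
  simp only [Complex.sub_re, Complex.one_re]
  linarith [Complex.re_le_norm (conj ζ * w)]

lemma hasDerivAt_logKernel (hζ : ‖ζ‖ ≤ 1) (hw : ‖w‖ < 1) :
    HasDerivAt (logKernel ζ) (conj ζ / (1 - conj ζ * w)) w := by
  have hlin : HasDerivAt (fun w => 1 - conj ζ * w) (-conj ζ) w := by
    simpa using ((hasDerivAt_id w).const_mul (conj ζ)).const_sub 1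
  have hlog := Complex.hasDerivAt_log (one_sub_conj_mul_mem_slitPlane hζ hw)
  refine ((hlog.comp w hlin).const_sub 1).congr_deriv ?_
  ring

lemma differentiableOn_logKernel (hζ : ‖ζ‖ ≤ 1) :
    DifferentiableOn ℂ (logKernel ζ) (ball 0 1) := fun _ hw =>
  (hasDerivAt_logKernel hζ (mem_ball_zero_iff.1 hw)).differentiableAt.differentiableWithinAt

@[simp]
lemma logKernel_zero : logKernel ζ 0 = 1 := by simp [logKernel]

lemma norm_deriv_logKernel_mul_le (hζ : ‖ζ‖ ≤ 1) (hw : ‖w‖ < 1) :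
    ‖deriv (logKernel ζ) w‖ * (1 - ‖w‖ ^ 2) ≤ 2 := by
  have hd : 1 - ‖ζ‖ * ‖w‖ ≤ ‖1 - conj ζ * w‖ := by
    simpa [norm_mul] using norm_sub_norm_le (1 : ℂ) (conj ζ * w)
  have hpos : 0 < 1 - ‖ζ‖ * ‖w‖ := by nlinarith [norm_nonneg ζ, norm_nonneg w]
  rw [(hasDerivAt_logKernel hζ hw).deriv, norm_div, Complex.norm_conj, div_mul_eq_mul_div,
    div_le_iff₀ (hpos.trans_le hd)]
  nlinarith [norm_nonneg ζ, norm_nonneg w]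

lemma norm_logKernel_self (hζ : ‖ζ‖ < 1) :
    ‖logKernel ζ ζ‖ = 1 - Real.log (1 - ‖ζ‖ ^ 2) := by
  have hpos : 0 < 1 - ‖ζ‖ ^ 2 := by nlinarith [norm_nonneg ζ]
  have h : 1 - conj ζ * ζ = ((1 - ‖ζ‖ ^ 2 : ℝ) : ℂ) := by
    rw [mul_comm, Complex.mul_conj, Complex.normSq_eq_norm_sq]; push_cast; ring
  rw [logKernel, h, ← Complex.ofReal_log hpos.le, ← Complex.ofReal_one, ← Complex.ofReal_sub,
    Complex.norm_real, Real.norm_of_nonneg]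
  linarith [Real.log_nonpos hpos.le (by nlinarith [norm_nonneg ζ] : 1 - ‖ζ‖ ^ 2 ≤ 1)]

end logKernel

lemma log_exp_div_one_sub_le {s : ℝ} (hs₀ : -1 < s) (hs₁ : s < 1) :
    Real.log (Real.exp 1 / (1 - s)) ≤ 2 * (1 - Real.log (1 - s ^ 2)) := by
  have h₁ : 0 < 1 - s := by linarith
  have h₂ : 0 < 1 + s := by linarith
  rw [Real.log_div (Real.exp_ne_zero 1) h₁.ne', Real.log_exp,
    show 1 - s ^ 2 = (1 - s) * (1 + s) by ring, Real.log_mul h₁.ne' h₂.ne']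
  linarith [Real.log_le_sub_one_of_pos h₁, Real.log_le_sub_one_of_pos h₂]

theorem stmt18_general (A : ℂ → ℂ)
    (hA : DifferentiableOn ℂ A (ball (0 : ℂ) 1))
    -- S_A : B → B is bounded
    (hbdd : ∃ C : ℝ, ∀ (f : ℂ → ℂ) (B : ℝ), DifferentiableOn ℂ f (ball (0 : ℂ) 1) →
      ‖f 0‖ ≤ B → (∀ z ∈ ball (0 : ℂ) 1, ‖deriv f z‖ * (1 - ‖z‖ ^ 2) ≤ B) →
      ∀ z ∈ ball (0 : ℂ) 1, ‖SAprime A f z‖ * (1 - ‖z‖ ^ 2) ≤ C * B) :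
    ∃ C : ℝ, ∀ z ∈ ball (0 : ℂ) 1,
      ‖A z‖ * (1 - ‖z‖ ^ 2) ^ 2 * Real.log (Real.exp 1 / (1 - ‖z‖)) ≤ C := by
  obtain ⟨C, hC⟩ := hbdd
  refine ⟨64 * C, fun z hz => ?_⟩
  have hz₁ : ‖z‖ < 1 := mem_ball_zero_iff.1 hz
  have hf : DifferentiableOn ℂ (logKernel z) (ball 0 1) := differentiableOn_logKernel hz₁.le
  have hSbound : ∀ w ∈ ball (0 : ℂ) 1, ‖SAprime A (logKernel z) w‖ * (1 - ‖w‖ ^ 2) ≤ C * 2 :=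
    hC _ 2 hf (by simp) fun w hw =>
      norm_deriv_logKernel_mul_le hz₁.le (mem_ball_zero_iff.1 hw)
  -- `SAprime A f` is by definition `radialPrimitive (fun w => f w * A w)`.
  have hSderiv : ∀ w ∈ ball (0 : ℂ) 1,
      HasDerivAt (SAprime A (logKernel z)) (logKernel z w * A w) w :=
    fun w hw => hasDerivAt_radialPrimitive (hf.mul hA) hw
  have hCauchy := norm_deriv_mul_one_sub_sq_sq_le
    (fun w hw => (hSderiv w hw).differentiableAt.differentiableWithinAt) hSbound hz
  rw [(hSderiv z hz).deriv, norm_mul, norm_logKernel_self hz₁] at hCauchy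
  calc ‖A z‖ * (1 - ‖z‖ ^ 2) ^ 2 * Real.log (Real.exp 1 / (1 - ‖z‖))
      ≤ ‖A z‖ * (1 - ‖z‖ ^ 2) ^ 2 * (2 * (1 - Real.log (1 - ‖z‖ ^ 2))) := by
        gcongr
        exact log_exp_div_one_sub_le (by linarith [norm_nonneg z]) hz₁
    _ ≤ 64 * C := by linarith

theorem stmt18 (ω : ℝ → ℝ) (A : ℂ → ℂ)
    (hωmeas : Measurable ω) (hωpos : ∀ r ∈ Set.Ioo (0 : ℝ) 1, 0 ≤ ω r)
    -- ω is normalized : ω₁ = 1/2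
    (hnorm : ∫ r in (0 : ℝ)..1, r * ω r = 1 / 2)
    -- ω belongs to the class R of regular weights
    (hreg : ∃ C α β : ℝ, 0 < C ∧ 0 < α ∧ α ≤ β ∧
      ∀ r t : ℝ, 0 ≤ r → r ≤ t → t < 1 →
        C⁻¹ * ((1 - r) / (1 - t)) ^ α * omegaHat ω t ≤ omegaHat ω r ∧
        omegaHat ω r ≤ C * ((1 - r) / (1 - t)) ^ β * omegaHat ω t)
    (hA : DifferentiableOn ℂ A (ball (0 : ℂ) 1))
    -- S_A : B → B is bounded
    (hbdd : ∃ C : ℝ, ∀ (f : ℂ → ℂ) (B : ℝ), DifferentiableOn ℂ f (ball (0 : ℂ) 1) →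
      ‖f 0‖ ≤ B → (∀ z ∈ ball (0 : ℂ) 1, ‖deriv f z‖ * (1 - ‖z‖ ^ 2) ≤ B) →
      ∀ z ∈ ball (0 : ℂ) 1, ‖SAprime A f z‖ * (1 - ‖z‖ ^ 2) ≤ C * B) :
    ∃ C : ℝ, ∀ z ∈ ball (0 : ℂ) 1,
      ‖A z‖ * (1 - ‖z‖ ^ 2) ^ 2 * Real.log (Real.exp 1 / (1 - ‖z‖)) ≤ C :=
  stmt18_general A hA hbdd
end
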